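/- arXiv:2111.14846 — 2 statements merged into one kernel-verified Lean document; each statement's English description precedes it below -/
import Mathlib

section
/- Let (X, Y) ~ G', where Y denotes the last N coordinates (so Y_i = (H·X)_i² − ε). Then for all sufficiently large N, Pr[ |Σ_{i=1}^{N} Y_i| ≥ 3·√N ] ≤ 2·exp(−1/ε). -/
open MeasureTheory ProbabilityTheory Finset

noncomputable section

/-- Bit strings of length `n`; there are `N = 2^n` of them. -/
abbrev BV (n : ℕ) := Fin n → Bool

/-- Inner product (mod nothing, just the count) of two bit strings. -/
def bip {n : ℕ} (x y : BV n) : ℕ := (Finset.univ.filter fun i => x i && y i).card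

/-- The `N × N` normalized Walsh-Hadamard matrix, `H_{x,y} = (-1)^{⟨x,y⟩} / √N`. -/
def Had (n : ℕ) : Matrix (BV n) (BV n) ℝ :=
  Matrix.of fun x y => (-1 : ℝ) ^ bip x y / Real.sqrt (2 ^ n)

/-- `ε = 1 / (C ln N)` with `N = 2^n`. -/
def eps (C : ℝ) (n : ℕ) : ℝ := 1 / (C * Real.log (2 ^ n))

/-- The Gaussian vector `X` with i.i.d. `N(0, ε)` coordinates. -/
def gaussVec (C : ℝ) (n : ℕ) : Measure (BV n → ℝ) :=
  Measure.pi fun _ => gaussianReal 0 (eps C n).toNNReal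

/-- The distribution `G'` of `Z = (X, Y∘Y - ε·𝟙)` with `Y = H·X`, packed as a
function on `BV n ⊕ BV n` (first `N` coordinates are `X`, last `N` are `Y∘Y - ε`). -/
def Gmeas' (C : ℝ) (n : ℕ) : Measure (BV n ⊕ BV n → ℝ) :=
  (gaussVec C n).map fun X => Sum.elim X fun i => ((Had n).mulVec X i) ^ 2 - eps C n

/-- Truncation to `[-1, 1]`. -/
def trnc (a : ℝ) : ℝ := min 1 (max (-1) a)

/-- Randomized rounding of `a` to `±1`: output `1` with probability `(1 + trnc a)/2`
and `-1` with probability `(1 - trnc a)/2`. -/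
def roundM (a : ℝ) : Measure ℝ :=
  ((1 + trnc a) / 2).toNNReal • Measure.dirac 1 +
    ((1 - trnc a) / 2).toNNReal • Measure.dirac (-1)

/-- The distribution `D` on `{±1}^{2N}`: sample `z ~ G'` and round each coordinate
independently. -/
def Dmeas (C : ℝ) (n : ℕ) : Measure (BV n ⊕ BV n → ℝ) :=
  (Gmeas' C n).bind fun z => Measure.pi fun i => roundM (z i)

/-- `F : ℝ^ι → ℝ` is multilinear if `F z = Σ_S F̂(S) ∏_{i ∈ S} z_i`. -/
def IsMultilinear {ι : Type*} [Fintype ι] [DecidableEq ι] (F : (ι → ℝ) → ℝ) : Prop :=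
  ∃ c : Finset ι → ℝ, ∀ z, F z = ∑ S : Finset ι, c S * ∏ i ∈ S, z i

/-- The Fourier coefficient `F̂(S)` of `F` (over the hypercube `{±1}^ι`); for a
multilinear `F` these are precisely its multilinear coefficients. -/
def mlCoeff {ι : Type*} [Fintype ι] [DecidableEq ι] (F : (ι → ℝ) → ℝ) (S : Finset ι) : ℝ :=
  (∑ z : ι → Bool, F (fun i => if z i then 1 else -1) * ∏ i ∈ S, (if z i then (1 : ℝ) else -1)) /
    2 ^ Fintype.card ι

/-- `L_{1,2}(F) = Σ_{|S| = 2} |F̂(S)|`. -/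
def L12 {ι : Type*} [Fintype ι] [DecidableEq ι] (F : (ι → ℝ) → ℝ) : ℝ :=
  ∑ S ∈ Finset.univ.filter (fun S : Finset ι => S.card = 2), |mlCoeff F S|

/-- The restriction `F_ρ` of `F` under `ρ = (S, w)`: coordinates outside `S` are
fixed to the values of `w`. -/
def restrictML {ι : Type*} [DecidableEq ι] (F : (ι → ℝ) → ℝ) (S : Finset ι)
    (w : ι → ℝ) : (ι → ℝ) → ℝ :=
  fun y => F fun i => if i ∈ S then y i else w i

/-- `φ(X, Y) = (1/N) Σ_i (Σ_j H_{ij} X_j)² Y_i`. -/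
def phi (n : ℕ) (X Y : BV n → ℝ) : ℝ :=
  (∑ i, ((Had n).mulVec X i) ^ 2 * Y i) / 2 ^ n

/-- The multilinear part `φ_{i≠j}(X, Y) = (1/N) Σ_i Σ_{j ≠ k} H_{ij} H_{ik} X_j X_k Y_i`. -/
def phiOff (n : ℕ) (X Y : BV n → ℝ) : ℝ :=
  (∑ i, ∑ j, ∑ k ∈ Finset.univ \ {j}, Had n i j * Had n i k * X j * X k * Y i) / 2 ^ n

/-- The Fourier coefficient `f̂(x) = 2^{-n} Σ_y f(y) (-1)^{⟨x,y⟩}` of `f : {0,1}^n → {±1}`. -/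
def hatF (n : ℕ) (f : BV n → ℝ) (x : BV n) : ℝ :=
  (∑ y, f y * (-1 : ℝ) ^ bip x y) / 2 ^ n

/-! Since `H` is orthogonal, `Σ_i Y_i = ‖X‖² - Nε` is a centred sum of `N` i.i.d. copies of
`ε·χ²₁`, whose moment generating function is `(1 - 2λε)^{-N/2}`. Chernoff's bound with
`λ = ±1/(2ε√N)` bounds each tail of the deviation `3√N` by `exp(1 - 3/(2ε))`, which is at most
`exp(-1/ε)` as soon as `ε ≤ 1/2`. -/

open Real
open scoped NNReal Matrix

lemma neg_one_pow_bip {n : ℕ} (x y : BV n) :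
    (-1 : ℝ) ^ bip x y = ∏ t, if x t && y t then -1 else 1 := by
  rw [bip, prod_ite, prod_const, prod_const_one, mul_one]

lemma sum_neg_one_pow_bip_mul {n : ℕ} (j k : BV n) :
    ∑ i : BV n, (-1 : ℝ) ^ bip i j * (-1) ^ bip i k = if j = k then 2 ^ n else 0 := by
  simp_rw [neg_one_pow_bip, ← prod_mul_distrib]
  rw [← Fintype.prod_sum (f := fun t (b : Bool) =>
    (if b && j t then (-1 : ℝ) else 1) * (if b && k t then -1 else 1))]
  have hfactor : ∀ t, ∑ b : Bool, (if b && j t then (-1 : ℝ) else 1) *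
      (if b && k t then -1 else 1) = if j t = k t then 2 else 0 := by
    intro t
    cases j t <;> cases k t <;> norm_num
  simp_rw [hfactor]
  split_ifs with hjk
  · simp [hjk]
  · obtain ⟨t, ht⟩ := Function.ne_iff.mp hjk
    exact prod_eq_zero (mem_univ t) (if_neg ht)

lemma Had_transpose_mul_self (n : ℕ) : (Had n)ᵀ * Had n = 1 := by
  ext j k
  have hN : (0 : ℝ) < 2 ^ n := by positivity
  simp only [Matrix.mul_apply, Matrix.transpose_apply, Had, Matrix.of_apply, div_mul_div_comm,
    mul_self_sqrt hN.le, ← sum_div, sum_neg_one_pow_bip_mul, Matrix.one_apply]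
  split_ifs <;> simp [hN.ne']

lemma sum_sq_mulVec_of_transpose_mul_self {ι : Type*} [Fintype ι] [DecidableEq ι]
    {A : Matrix ι ι ℝ} (hA : Aᵀ * A = 1) (x : ι → ℝ) : ∑ i, (A *ᵥ x) i ^ 2 = ∑ i, x i ^ 2 := by
  simp only [sq]
  change (A *ᵥ x) ⬝ᵥ (A *ᵥ x) = x ⬝ᵥ x
  rw [Matrix.dotProduct_mulVec, ← Matrix.vecMul_transpose, Matrix.vecMul_vecMul, hA,
    Matrix.vecMul_one]

lemma inv_sqrt_one_sub_le_exp {u : ℝ} (hu : u ≤ 1 / 2) :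
    (√(1 - u))⁻¹ ≤ exp ((u + 2 * u ^ 2) / 2) := by
  rw [← sqrt_inv, exp_half]
  refine sqrt_le_sqrt ?_
  rw [← one_div, div_le_iff₀ (by linarith)]
  nlinarith [mul_nonneg (sub_nonneg.mpr (add_one_le_exp (u + 2 * u ^ 2)))
    (by linarith : 0 ≤ 1 - u)]

lemma inv_sqrt_one_add_le_exp {u : ℝ} (h0 : 0 ≤ u) :
    (√(1 + u))⁻¹ ≤ exp (-(u - u ^ 2) / 2) := by
  rw [← sqrt_inv, exp_half]
  refine sqrt_le_sqrt ?_
  rw [← one_div, div_le_iff₀ (by linarith)]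
  nlinarith [mul_nonneg (sub_nonneg.mpr (add_one_le_exp (-(u - u ^ 2))))
    (by linarith : 0 ≤ 1 + u)]

section GaussianSquare

variable {v : ℝ≥0} {c : ℝ}

lemma gaussianPDFReal_mul_exp_mul_sq (hv : v ≠ 0) (x : ℝ) :
    gaussianPDFReal 0 v x * exp (c * x ^ 2)
      = (√(2 * π * v))⁻¹ * exp (-((1 - 2 * c * v) / (2 * v)) * x ^ 2) := by
  have hv' : (v : ℝ) ≠ 0 := NNReal.coe_ne_zero.mpr hv
  rw [gaussianPDFReal, mul_assoc, ← exp_add]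
  congr 2
  field_simp
  ring

lemma integrable_exp_mul_sq_gaussianReal (hc : 2 * c * v < 1) :
    Integrable (fun x => exp (c * x ^ 2)) (gaussianReal 0 v) := by
  rcases eq_or_ne v 0 with rfl | hv
  · rw [gaussianReal_zero_var]
    exact integrable_dirac enorm_lt_top
  have hb : 0 < (1 - 2 * c * v) / (2 * v) := by
    have : (0 : ℝ) < v := by positivity
    positivity
  rw [gaussianReal_of_var_ne_zero _ hv, integrable_withDensity_iff_integrable_smul'
    (measurable_gaussianPDF _ _) (ae_of_all _ fun _ => gaussianPDF_lt_top)]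
  simp_rw [toReal_gaussianPDF, smul_eq_mul, gaussianPDFReal_mul_exp_mul_sq hv]
  exact (integrable_exp_neg_mul_sq hb).const_mul _

lemma mgf_sq_gaussianReal (hc : 2 * c * v < 1) :
    mgf (fun x => x ^ 2) (gaussianReal 0 v) c = (√(1 - 2 * c * v))⁻¹ := by
  rcases eq_or_ne v 0 with rfl | hv
  · simp [mgf, gaussianReal_zero_var]
  have hv' : (0 : ℝ) < v := by positivity
  have h1 : 0 < 1 - 2 * c * v := by linarith
  rw [mgf, integral_gaussianReal_eq_integral_smul hv]
  simp_rw [smul_eq_mul, gaussianPDFReal_mul_exp_mul_sq hv]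
  rw [integral_const_mul, integral_gaussian, ← sqrt_inv, ← sqrt_mul (by positivity), ← sqrt_inv]
  congr 1
  field_simp

end GaussianSquare

section PiSum

variable {ι E : Type*} [Fintype ι] [MeasurableSpace E] {μ : Measure E} [SigmaFinite μ]

lemma mgf_sum_comp_pi (f : E → ℝ) (t : ℝ) :
    mgf (fun x : ι → E => ∑ i, f (x i)) (Measure.pi fun _ => μ) t
      = mgf f μ t ^ Fintype.card ι := by
  simp_rw [mgf, mul_sum, exp_sum]
  exact integral_fintype_prod_eq_pow (μ := μ) (fun x => exp (t * f x))

lemma integrable_exp_mul_sum_comp_pi {f : E → ℝ} {t : ℝ}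
    (hf : Integrable (fun x => exp (t * f x)) μ) :
    Integrable (fun x : ι → E => exp (t * ∑ i, f (x i))) (Measure.pi fun _ => μ) := by
  simp_rw [mul_sum, exp_sum]
  exact Integrable.fintype_prod (f := fun _ x => exp (t * f x)) fun _ => hf

end PiSum

section GaussianSumSqTail

variable {ι : Type*} [Fintype ι] {v : ℝ≥0}

lemma gaussian_pi_sum_sq_upper_tail (hv : v ≠ 0) (hN : 4 ≤ Fintype.card ι) (t : ℝ) :
    (Measure.pi fun _ : ι => gaussianReal 0 v).real
        {x | Fintype.card ι * v + t * √(Fintype.card ι) ≤ ∑ i, x i ^ 2}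
      ≤ exp (1 - t / (2 * v)) := by
  set s := √(Fintype.card ι : ℝ)
  have hs2 : s ^ 2 = Fintype.card ι := sq_sqrt (Nat.cast_nonneg _)
  have hs : 2 ≤ s := le_sqrt_of_sq_le (by norm_num; exact_mod_cast hN)
  have hv' : (0 : ℝ) < v := by positivity
  set l := 1 / (2 * v * s)
  have hl : 2 * l * v = 1 / s := by simp only [l]; field_simp
  have hc : 2 * l * v < 1 := by rw [hl, div_lt_one (by linarith)]; linarith
  calc _ ≤ exp (-l * (Fintype.card ι * v + t * s)) *
          mgf (fun x : ι → ℝ => ∑ i, x i ^ 2) (Measure.pi fun _ : ι => gaussianReal 0 v) l :=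
        measure_ge_le_exp_mul_mgf _ (by positivity)
          (integrable_exp_mul_sum_comp_pi (integrable_exp_mul_sq_gaussianReal hc))
    _ = exp (-l * (Fintype.card ι * v + t * s)) * (√(1 - 1 / s))⁻¹ ^ Fintype.card ι := by
        rw [mgf_sum_comp_pi (fun y => y ^ 2), mgf_sq_gaussianReal hc, hl]
    _ ≤ exp (-l * (Fintype.card ι * v + t * s)) *
          exp ((1 / s + 2 * (1 / s) ^ 2) / 2) ^ Fintype.card ι := by
        gcongr
        exact inv_sqrt_one_sub_le_exp (by rw [div_le_div_iff₀ (by linarith) two_pos]; linarith)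
    _ = exp (1 - t / (2 * v)) := by
        rw [← exp_nat_mul, ← exp_add, ← hs2]
        congr 1
        simp only [l]
        field_simp
        ring

lemma gaussian_pi_sum_sq_lower_tail (hv : v ≠ 0) (hN : 0 < Fintype.card ι) (t : ℝ) :
    (Measure.pi fun _ : ι => gaussianReal 0 v).real
        {x | ∑ i, x i ^ 2 ≤ Fintype.card ι * v - t * √(Fintype.card ι)}
      ≤ exp (1 / 2 - t / (2 * v)) := by
  set s := √(Fintype.card ι : ℝ)
  have hs2 : s ^ 2 = Fintype.card ι := sq_sqrt (Nat.cast_nonneg _)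
  have hs : 0 < s := sqrt_pos.mpr (by exact_mod_cast hN)
  have hv' : (0 : ℝ) < v := by positivity
  set l := -1 / (2 * v * s)
  have hl : 2 * l * v = -(1 / s) := by simp only [l]; field_simp
  have hc : 2 * l * v < 1 := by rw [hl]; linarith [one_div_pos.mpr hs]
  calc _ ≤ exp (-l * (Fintype.card ι * v - t * s)) *
          mgf (fun x : ι → ℝ => ∑ i, x i ^ 2) (Measure.pi fun _ : ι => gaussianReal 0 v) l :=
        measure_le_le_exp_mul_mgf _ (div_nonpos_of_nonpos_of_nonneg (by norm_num) (by positivity))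
          (integrable_exp_mul_sum_comp_pi (integrable_exp_mul_sq_gaussianReal hc))
    _ = exp (-l * (Fintype.card ι * v - t * s)) * (√(1 + 1 / s))⁻¹ ^ Fintype.card ι := by
        rw [mgf_sum_comp_pi (fun y => y ^ 2), mgf_sq_gaussianReal hc, hl, sub_neg_eq_add]
    _ ≤ exp (-l * (Fintype.card ι * v - t * s)) *
          exp (-(1 / s - (1 / s) ^ 2) / 2) ^ Fintype.card ι := by
        gcongr
        exact inv_sqrt_one_add_le_exp (by positivity)
    _ = exp (1 / 2 - t / (2 * v)) := by
        rw [← exp_nat_mul, ← exp_add, ← hs2]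
        congr 1
        simp only [l]
        field_simp
        ring

lemma gaussian_pi_sum_sq_deviation (hv : v ≠ 0) (hN : 4 ≤ Fintype.card ι) (t : ℝ) :
    (Measure.pi fun _ : ι => gaussianReal 0 v).real
        {x | t * √(Fintype.card ι) ≤ |∑ i, x i ^ 2 - Fintype.card ι * v|}
      ≤ 2 * exp (1 - t / (2 * v)) := by
  have hsplit : {x : ι → ℝ | t * √(Fintype.card ι) ≤ |∑ i, x i ^ 2 - Fintype.card ι * v|} ⊆
      {x | Fintype.card ι * v + t * √(Fintype.card ι) ≤ ∑ i, x i ^ 2} ∪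
        {x | ∑ i, x i ^ 2 ≤ Fintype.card ι * v - t * √(Fintype.card ι)} := by
    intro x hx
    simp only [Set.mem_union, Set.mem_ofPred_eq] at hx ⊢
    rcases le_abs'.mp hx with h | h
    · right; linarith
    · left; linarith
  calc _ ≤ _ := measureReal_mono hsplit
    _ ≤ _ := measureReal_union_le _ _
    _ ≤ exp (1 - t / (2 * v)) + exp (1 / 2 - t / (2 * v)) :=
        add_le_add (gaussian_pi_sum_sq_upper_tail hv hN t)
          (gaussian_pi_sum_sq_lower_tail hv (by omega) t)
    _ ≤ 2 * exp (1 - t / (2 * v)) := by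
        linarith [exp_le_exp.mpr (show 1 / 2 - t / (2 * v) ≤ 1 - t / (2 * v) by linarith)]

end GaussianSumSqTail

lemma card_BV (n : ℕ) : Fintype.card (BV n) = 2 ^ n := by
  simp

lemma measureReal_Gmeas'_le_abs_sum_inr (C : ℝ) (n : ℕ) (r : ℝ) :
    (Gmeas' C n).real {z | r ≤ |∑ i, z (Sum.inr i)|}
      = (gaussVec C n).real {X | r ≤ |∑ j, X j ^ 2 - 2 ^ n * eps C n|} := by
  have hmeas : Measurable fun X : BV n → ℝ =>
      Sum.elim X fun i => (Had n *ᵥ X) i ^ 2 - eps C n := by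
    refine measurable_pi_iff.mpr ?_
    rintro (j | i)
    · exact measurable_pi_apply j
    · simp only [Sum.elim_inr, Matrix.mulVec, dotProduct]
      fun_prop
  rw [Gmeas', map_measureReal_apply hmeas (measurableSet_le (by fun_prop) (by fun_prop))]
  congr 1
  ext X
  simp only [Set.mem_preimage, Set.mem_ofPred_eq, Sum.elim_inr, sum_sub_distrib,
    sum_sq_mulVec_of_transpose_mul_self (Had_transpose_mul_self n), sum_const, card_univ,
    card_BV, nsmul_eq_mul]
  push_cast
  rfl

lemma eps_eq (C : ℝ) (n : ℕ) : eps C n = 1 / (C * n * log 2) := by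
  rw [eps, log_pow, mul_assoc]

lemma eps_pos {C : ℝ} (hC : 0 < C) {n : ℕ} (hn : n ≠ 0) : 0 < eps C n := by
  rw [eps_eq]
  have : (0 : ℝ) < n := by positivity
  have := log_pos one_lt_two
  positivity

lemma eps_le_half {C : ℝ} (hC : 3 ≤ C) {n : ℕ} (hn : n ≠ 0) : eps C n ≤ 1 / 2 := by
  have hn1 : (1 : ℝ) ≤ n := by exact_mod_cast Nat.one_le_iff_ne_zero.mpr hn
  have hlog := log_two_gt_d9
  rw [eps_eq]
  apply one_div_le_one_div_of_le two_pos
  nlinarith [mul_le_mul hC hn1 zero_le_one (by linarith)]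

lemma one_sub_three_div_two_mul_le {ε : ℝ} (hε : 0 < ε) (hε2 : ε ≤ 1 / 2) :
    1 - 3 / (2 * ε) ≤ -1 / ε := by
  have hhalf : 1 ≤ 1 / (2 * ε) := by rw [le_div_iff₀ (by positivity)]; linarith
  have hsplit : 3 / (2 * ε) = 1 / ε + 1 / (2 * ε) := by
    field_simp
    ring
  rw [neg_div]
  linarith

/-- Let `(X, Y) ~ G'` with `Y` the last `N` coordinates
(`Y_i = (H X)_i² - ε`). For all sufficiently large `N`,
`Pr[|Σ_i Y_i| ≥ 3 √N] ≤ 2 exp(-1/ε)`. -/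
theorem stmt13 (C : ℝ) (hC : 20 ≤ C) :
    ∃ n₀ : ℕ, ∀ n : ℕ, n₀ ≤ n →
      ((Gmeas' C n) {z | 3 * Real.sqrt (2 ^ n) ≤ |∑ i, z (Sum.inr i)|}).toReal
        ≤ 2 * Real.exp (-1 / eps C n) := by
  refine ⟨2, fun n hn => ?_⟩
  have hε : 0 < eps C n := eps_pos (by linarith) (by omega)
  have hε2 : eps C n ≤ 1 / 2 := eps_le_half (by linarith) (by omega)
  have hN : 4 ≤ Fintype.card (BV n) := by
    rw [card_BV]
    exact Nat.pow_le_pow_right two_pos hn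
  have hdev := gaussian_pi_sum_sq_deviation (Real.toNNReal_pos.mpr hε).ne' hN 3
  rw [card_BV, Real.coe_toNNReal _ hε.le] at hdev
  push_cast at hdev
  calc _ = (gaussVec C n).real {X | 3 * √(2 ^ n) ≤ |∑ j, X j ^ 2 - 2 ^ n * eps C n|} :=
        measureReal_Gmeas'_le_abs_sum_inr C n _
    _ ≤ 2 * exp (1 - 3 / (2 * eps C n)) := hdev
    _ ≤ 2 * exp (-1 / eps C n) := by
        gcongr
        exact one_sub_three_div_two_mul_le hε hε2
end
end

section
/- There exists a constant C₀ ≥ 20 such that for every C ≥ C₀: if (X, Y) ~ G' (with Y denoting the last N coordinates, Y_i = (H·X)_i² − ε), then Pr[ trnc(X, Y) ≠ (X, Y) ] ≤ 2·N^{−2}, i.e., with probability at least 1 − 2N^{−2} every coordinate of (X,Y) lies in [−1, 1]. -/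
open MeasureTheory ProbabilityTheory Finset

noncomputable section

/-! Every coordinate of `Z` is a function of `⟨u, X⟩` for a unit vector `u`: a basis vector for
`X_x`, the `i`-th row of `H` for `(HX)_i² - ε`. Such a linear form is `ε`-sub-Gaussian, so
`Pr[|⟨u, X⟩| ≥ 1] ≤ 2 exp(-1/(2ε)) = 2 N^{-C/2}`; and since `0 ≤ ε ≤ 1`, `(HX)_i² - ε` leaves
`[-1, 1]` only if `|(HX)_i| ≥ 1`. A union bound over the `2N` coordinates gives
`4N · N^{-C/2} ≤ 2 N^{-2}` once `C ≥ 8`. -/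

open scoped NNReal

lemma hasSubgaussianMGF_id_gaussianReal (v : ℝ≥0) :
    HasSubgaussianMGF id v (gaussianReal 0 v) where
  integrable_exp_mul t := integrable_exp_mul_gaussianReal t
  mgf_le t := by simp [mgf_id_gaussianReal]

lemma hasSubgaussianMGF_pi_eval {ι : Type*} [Fintype ι] (v : ℝ≥0) (j : ι) :
    HasSubgaussianMGF (fun X : ι → ℝ => X j) v (Measure.pi fun _ => gaussianReal 0 v) := by
  rw [← HasSubgaussianMGF.id_map_iff (measurable_pi_apply j).aemeasurable,
    (measurePreserving_eval _ j).map_eq]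
  exact hasSubgaussianMGF_id_gaussianReal v

lemma hasSubgaussianMGF_pi_sum_mul {ι : Type*} [Fintype ι] (v : ℝ≥0) (a : ι → ℝ)
    (ha : ∑ j, a j ^ 2 = 1) :
    HasSubgaussianMGF (fun X : ι → ℝ => ∑ j, a j * X j) v
      (Measure.pi fun _ => gaussianReal 0 v) := by
  have hterm (j : ι) : HasSubgaussianMGF (fun X : ι → ℝ => a j * X j) ((a j ^ 2).toNNReal * v)
      (Measure.pi fun _ => gaussianReal 0 v) := by
    convert (hasSubgaussianMGF_pi_eval v j).const_mul (a j) using 2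
    exact congrArg (· * v) (Real.toNNReal_of_nonneg (sq_nonneg _))
  convert HasSubgaussianMGF.sum_of_iIndepFun (s := Finset.univ)
    (iIndepFun_pi (X := fun j (x : ℝ) => a j * x) fun j => by fun_prop) fun j _ => hterm j
  rw [← Finset.sum_mul]
  ext
  simp [sq_nonneg, ha]

lemma ProbabilityTheory.HasSubgaussianMGF.measureReal_abs_ge_le {Ω : Type*}
    {m : MeasurableSpace Ω} {μ : Measure Ω} {X : Ω → ℝ} {c : ℝ≥0} (h : HasSubgaussianMGF X c μ)
    {r : ℝ} (hr : 0 ≤ r) :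
    μ.real {ω | r ≤ |X ω|} ≤ 2 * Real.exp (-r ^ 2 / (2 * c)) := by
  have hsplit : {ω | r ≤ |X ω|} = {ω | r ≤ X ω} ∪ {ω | r ≤ (-X) ω} := by
    ext ω; simp only [Set.mem_ofPred_eq, Set.mem_union, Pi.neg_apply, le_abs]
  calc μ.real {ω | r ≤ |X ω|} ≤ μ.real {ω | r ≤ X ω} + μ.real {ω | r ≤ (-X) ω} := by
        rw [hsplit]; exact measureReal_union_le _ _
    _ ≤ _ := by linarith [h.measure_ge_le hr, h.neg.measure_ge_le hr]

lemma Had_sq (n : ℕ) (i j : BV n) : Had n i j ^ 2 = (2 ^ n)⁻¹ := by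
  rw [Had, Matrix.of_apply, div_pow, ← pow_mul, pow_mul', neg_one_sq, one_pow,
    Real.sq_sqrt (by positivity), one_div]

lemma sum_Had_sq (n : ℕ) (i : BV n) : ∑ j, Had n i j ^ 2 = 1 := by
  simp [Had_sq]

lemma trnc_eq_self_iff {a : ℝ} : trnc a = a ↔ |a| ≤ 1 := by
  rw [abs_le, trnc]
  constructor
  · intro h
    rw [← h]
    exact ⟨le_min (by norm_num) (le_max_left _ _), min_le_left _ _⟩
  · rintro ⟨h1, h2⟩
    rw [max_eq_right h1, min_eq_right h2]

lemma continuous_trnc : Continuous trnc :=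
  continuous_const.min (continuous_const.max continuous_id)

lemma measurableSet_exists_ne_trnc {ι : Type*} [Countable ι] :
    MeasurableSet {z : ι → ℝ | ∃ i, z i ≠ trnc (z i)} := by
  rw [Set.ofPred_exists]
  exact .iUnion fun i => (measurableSet_eq_fun (measurable_pi_apply i)
    (continuous_trnc.measurable.comp (measurable_pi_apply i))).compl

lemma one_le_abs_of_sq_sub_ne_trnc {y ε : ℝ} (hε0 : 0 ≤ ε) (hε1 : ε ≤ 1)
    (h : y ^ 2 - ε ≠ trnc (y ^ 2 - ε)) : 1 ≤ |y| := by
  rw [ne_comm, Ne, trnc_eq_self_iff, not_le, lt_abs] at h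
  have : 1 < y ^ 2 := by rcases h with h | h <;> nlinarith
  exact (one_lt_sq_iff_one_lt_abs y |>.1 this).le

instance isProbabilityMeasure_gaussVec (C : ℝ) (n : ℕ) :
    IsProbabilityMeasure (gaussVec C n) := by
  unfold gaussVec; infer_instance

lemma measureReal_exists_ne_trnc_le (C : ℝ) (n : ℕ) (hε0 : 0 ≤ eps C n) (hε1 : eps C n ≤ 1) :
    (Gmeas' C n).real {z | ∃ i, z i ≠ trnc (z i)}
      ≤ 2 * 2 ^ n * (2 * Real.exp (-1 / (2 * eps C n))) := by
  set v := (eps C n).toNNReal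
  have hv : (v : ℝ) = eps C n := Real.coe_toNNReal _ hε0
  set F : (BV n → ℝ) → BV n ⊕ BV n → ℝ :=
    fun X => Sum.elim X fun i => ((Had n).mulVec X i) ^ 2 - eps C n
  have hF : Measurable F := by
    refine measurable_pi_iff.2 fun c => ?_
    cases c <;> simp only [F, Sum.elim_inl, Sum.elim_inr] <;> fun_prop
  have hsub : F ⁻¹' {z | ∃ i, z i ≠ trnc (z i)} ⊆
      (⋃ x, {X | 1 ≤ |X x|}) ∪ ⋃ i, {X | 1 ≤ |∑ j, Had n i j * X j|} := by
    rintro X ⟨x | i, hc⟩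
    · refine Or.inl (Set.mem_iUnion.2 ⟨x, ?_⟩)
      rw [ne_comm, Ne, trnc_eq_self_iff, not_le] at hc
      exact hc.le
    · exact Or.inr (Set.mem_iUnion.2 ⟨i, one_le_abs_of_sq_sub_ne_trnc hε0 hε1 hc⟩)
  have htail {f : (BV n → ℝ) → ℝ} (hf : HasSubgaussianMGF f v (gaussVec C n)) :
      (gaussVec C n).real {X | 1 ≤ |f X|} ≤ 2 * Real.exp (-1 / (2 * eps C n)) := by
    simpa [hv] using hf.measureReal_abs_ge_le zero_le_one
  rw [Gmeas', map_measureReal_apply hF measurableSet_exists_ne_trnc]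
  calc (gaussVec C n).real (F ⁻¹' {z | ∃ i, z i ≠ trnc (z i)})
      ≤ ∑ x, (gaussVec C n).real {X | 1 ≤ |X x|}
        + ∑ i, (gaussVec C n).real {X | 1 ≤ |∑ j, Had n i j * X j|} :=
        (measureReal_mono hsub).trans <| (measureReal_union_le _ _).trans <|
          add_le_add (measureReal_iUnion_fintype_le _) (measureReal_iUnion_fintype_le _)
    _ ≤ ∑ _x : BV n, 2 * Real.exp (-1 / (2 * eps C n))
        + ∑ _i : BV n, 2 * Real.exp (-1 / (2 * eps C n)) :=
        add_le_add (sum_le_sum fun x _ => htail (hasSubgaussianMGF_pi_eval v x))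
          (sum_le_sum fun i _ => htail (hasSubgaussianMGF_pi_sum_mul v _ (sum_Had_sq n i)))
    _ = _ := by
      simp only [sum_const, card_univ, Fintype.card_pi, Fintype.card_bool, prod_const,
        Fintype.card_fin, nsmul_eq_mul, Nat.cast_pow, Nat.cast_ofNat]
      ring

lemma eps_nonneg {C : ℝ} (hC : 0 ≤ C) (n : ℕ) : 0 ≤ eps C n := by
  have : 0 ≤ Real.log (2 ^ n : ℝ) := Real.log_nonneg (one_le_pow₀ one_le_two)
  unfold eps; positivity

lemma eps_le_one {C : ℝ} (hC : 2 ≤ C) {n : ℕ} (hn : 1 ≤ n) : eps C n ≤ 1 := by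
  have hL : Real.log 2 ≤ Real.log (2 ^ n : ℝ) :=
    Real.log_le_log two_pos (le_self_pow₀ one_le_two (by omega))
  have := Real.log_two_gt_d9
  rw [eps, div_le_one (by nlinarith)]
  nlinarith

lemma neg_one_div_two_mul_eps (C : ℝ) (n : ℕ) :
    -1 / (2 * eps C n) = -(C * Real.log (2 ^ n) / 2) := by
  rw [eps]; field_simp

lemma four_mul_mul_exp_le {C : ℝ} (hC : 8 ≤ C) {N : ℝ} (hN : 2 ≤ N) :
    2 * N * (2 * Real.exp (-(C * Real.log N / 2))) ≤ 2 / N ^ 2 := by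
  have hL : 0 < Real.log N := Real.log_pos (by linarith)
  have hexp : Real.exp (-(C * Real.log N / 2)) ≤ (N ^ 4)⁻¹ := calc
    _ ≤ Real.exp (-Real.log (N ^ 4)) := by
      rw [Real.exp_le_exp, Real.log_pow]; push_cast; nlinarith
    _ = (N ^ 4)⁻¹ := by rw [Real.exp_neg, Real.exp_log (by positivity)]
  calc 2 * N * (2 * Real.exp (-(C * Real.log N / 2))) ≤ 2 * N * (2 * (N ^ 4)⁻¹) := by gcongr
    _ = 2 / N ^ 2 * (2 / N) := by field_simp
    _ ≤ 2 / N ^ 2 := mul_le_of_le_one_right (by positivity) ((div_le_one (by positivity)).2 hN)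

/-- There exists a constant `C₀ ≥ 20` such that for every `C ≥ C₀`:
if `(X, Y) ~ G'` then `Pr[trnc(X, Y) ≠ (X, Y)] ≤ 2 N⁻²`. -/
theorem stmt14 :
    ∃ C₀ : ℝ, 20 ≤ C₀ ∧
      ∀ C : ℝ, C₀ ≤ C → ∀ n : ℕ, 1 ≤ n →
        ((Gmeas' C n) {z | ∃ i, z i ≠ trnc (z i)}).toReal ≤ 2 / (2 ^ n : ℝ) ^ 2 := by
  refine ⟨20, le_rfl, fun C hC n hn => ?_⟩
  calc (Gmeas' C n).real {z | ∃ i, z i ≠ trnc (z i)}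
      ≤ 2 * 2 ^ n * (2 * Real.exp (-1 / (2 * eps C n))) :=
        measureReal_exists_ne_trnc_le C n (eps_nonneg (by linarith) n)
          (eps_le_one (by linarith) hn)
    _ ≤ 2 / (2 ^ n : ℝ) ^ 2 := by
      rw [neg_one_div_two_mul_eps]
      exact four_mul_mul_exp_le (by linarith) (le_self_pow₀ one_le_two (by omega))
end
end
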